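/- Let 0 < p, p̂ ≤ 1/2 and τ ≥ 0, and suppose p̂ ∈ [(1+τ)⁻¹ p, (1+τ) p]. Then (1+τ)⁻⁴ · U(p)/p² ≤ U(p̂)/p̂² ≤ (1+τ)⁴ · U(p)/p². -/

import Mathlib

/-!
Write `x_p := Φ⁻¹(1 - p)`, so that `Φ(-x_p) = p` and `U(p) = φ(x_p)²`. As `p` increases on
`(0, 1/2]`, the quantile `x_p ≥ 0` decreases, hence `U(p)` increases (`φ` decreases on `[0, ∞)`),
while `U(p)/p² = (φ(x_p)/Φ(-x_p))²` decreases because the Gaussian hazard rate `φ(x)/Φ(-x)` is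
increasing. For `p ≤ q ≤ c p` the two monotonicities give
`U(q)/q² ≤ U(p)/p² ≤ U(q)/p² ≤ c² U(q)/q²`, which is stronger than the claimed bound.
-/

open Real

/-- Standard Gaussian density. -/
noncomputable def gphi (x : ℝ) : ℝ := (Real.sqrt (2 * Real.pi))⁻¹ * Real.exp (-(x ^ 2) / 2)

/-- Standard Gaussian CDF. -/
noncomputable def Phi (r : ℝ) : ℝ := ∫ x in Set.Iic r, gphi x

/-- Inverse of the standard Gaussian CDF (on (0,1)). -/
noncomputable def PhiInv : ℝ → ℝ := Function.invFun Phi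

/-- `U(p) := (φ(Φ⁻¹(1 - p)))²`. -/
noncomputable def Ufun (p : ℝ) : ℝ := (gphi (PhiInv (1 - p))) ^ 2

open MeasureTheory Set Filter Topology ProbabilityTheory

lemma gphi_eq_gaussianPDFReal : gphi = gaussianPDFReal 0 1 := by
  ext x
  simp [gphi, gaussianPDFReal]

lemma gphi_pos (x : ℝ) : 0 < gphi x := by
  rw [gphi]
  positivity

lemma gphi_neg (x : ℝ) : gphi (-x) = gphi x := by
  simp [gphi]

lemma integrable_gphi : Integrable gphi :=
  gphi_eq_gaussianPDFReal ▸ integrable_gaussianPDFReal 0 1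

lemma integral_gphi : ∫ x, gphi x = 1 :=
  gphi_eq_gaussianPDFReal ▸ integral_gaussianPDFReal_eq_one 0 one_ne_zero

lemma gphi_antitoneOn : AntitoneOn gphi (Ici 0) := by
  intro x hx y _ hxy
  unfold gphi
  gcongr

lemma gphi_mul_gphi_add_le {x y s : ℝ} (hxy : x ≤ y) (hs : 0 ≤ s) :
    gphi x * gphi (s + y) ≤ gphi y * gphi (s + x) := by
  unfold gphi
  rw [mul_mul_mul_comm, mul_mul_mul_comm _ (rexp _), ← exp_add, ← exp_add]
  refine mul_le_mul_of_nonneg_left (exp_le_exp.2 ?_) (by positivity)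
  nlinarith

lemma integral_Ioi_comp_add_right (f : ℝ → ℝ) (c : ℝ) :
    ∫ s in Ioi 0, f (s + c) = ∫ t in Ioi c, f t := by
  have hshift : MeasurableEmbedding fun x : ℝ => x + c :=
    (Homeomorph.addRight c).isClosedEmbedding.measurableEmbedding
  have hpre : (fun x : ℝ => x + c) ⁻¹' Ioi c = Ioi 0 := by
    ext x
    simp
  rw [← hpre, ← hshift.setIntegral_map, map_add_right_eq_self]

lemma Phi_sub_Phi (a b : ℝ) : Phi b - Phi a = ∫ x in a..b, gphi x :=
  intervalIntegral.integral_Iic_sub_Iic integrable_gphi.integrableOn integrable_gphi.integrableOn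

lemma Phi_add_integral_Ioi (r : ℝ) : Phi r + ∫ x in Ioi r, gphi x = 1 := by
  rw [Phi, intervalIntegral.integral_Iic_add_Ioi integrable_gphi.integrableOn
    integrable_gphi.integrableOn, integral_gphi]

lemma Phi_neg_eq_integral_Ioi (x : ℝ) : Phi (-x) = ∫ t in Ioi x, gphi t := by
  rw [Phi, ← integral_comp_neg_Ioi]
  simp_rw [gphi_neg]

lemma Phi_neg (x : ℝ) : Phi (-x) = 1 - Phi x := by
  linarith [Phi_neg_eq_integral_Ioi x, Phi_add_integral_Ioi x]

lemma Phi_zero : Phi 0 = 1 / 2 := by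
  linarith [neg_zero (G := ℝ) ▸ Phi_neg 0]

lemma Phi_strictMono : StrictMono Phi := by
  intro a b hab
  have hpos : 0 < ∫ x in a..b, gphi x :=
    intervalIntegral.intervalIntegral_pos_of_pos integrable_gphi.intervalIntegrable gphi_pos hab
  linarith [Phi_sub_Phi a b]

lemma Phi_eq_Phi_zero_add (r : ℝ) : Phi r = Phi 0 + ∫ x in 0..r, gphi x := by
  linarith [Phi_sub_Phi 0 r]

lemma continuous_Phi : Continuous Phi := by
  rw [funext Phi_eq_Phi_zero_add]
  exact continuous_const.add
    (intervalIntegral.continuous_primitive (fun _ _ => integrable_gphi.intervalIntegrable) 0)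

lemma tendsto_Phi_atTop : Tendsto Phi atTop (𝓝 1) := by
  rw [funext Phi_eq_Phi_zero_add, ← Phi_add_integral_Ioi 0]
  exact tendsto_const_nhds.add
    (intervalIntegral_tendsto_integral_Ioi 0 integrable_gphi.integrableOn tendsto_id)

lemma Phi_PhiInv {y : ℝ} (hy0 : 0 < y) (hy1 : y < 1) : Phi (PhiInv y) = y := by
  obtain ⟨b, hyb, hb⟩ := ((tendsto_Phi_atTop.eventually (eventually_gt_nhds hy1)).and
    (tendsto_Phi_atTop.eventually (eventually_gt_nhds (by linarith : 1 - y < 1)))).exists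
  have hy_range : y ∈ range Phi :=
    mem_range_of_exists_le_of_exists_ge continuous_Phi ⟨-b, by linarith [Phi_neg b]⟩ ⟨b, hyb.le⟩
  exact Function.invFun_eq hy_range

lemma Phi_neg_PhiInv_one_sub {p : ℝ} (hp0 : 0 < p) (hp1 : p < 1) :
    Phi (-PhiInv (1 - p)) = p := by
  rw [Phi_neg, Phi_PhiInv (by linarith) (by linarith)]
  ring

lemma PhiInv_one_sub_le {p q : ℝ} (hp0 : 0 < p) (hpq : p ≤ q) (hq1 : q < 1) :
    PhiInv (1 - q) ≤ PhiInv (1 - p) := by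
  rw [← Phi_strictMono.le_iff_le, Phi_PhiInv (by linarith) (by linarith),
    Phi_PhiInv (by linarith) (by linarith)]
  linarith

lemma PhiInv_one_sub_nonneg {p : ℝ} (hp0 : 0 < p) (hp : p ≤ 1 / 2) : 0 ≤ PhiInv (1 - p) := by
  rw [← Phi_strictMono.le_iff_le, Phi_zero, Phi_PhiInv (by linarith) (by linarith)]
  linarith

lemma gphi_mul_Phi_neg_le {x y : ℝ} (hxy : x ≤ y) : gphi x * Phi (-y) ≤ gphi y * Phi (-x) := by
  rw [Phi_neg_eq_integral_Ioi, Phi_neg_eq_integral_Ioi, ← integral_Ioi_comp_add_right gphi y,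
    ← integral_Ioi_comp_add_right gphi x, ← integral_const_mul, ← integral_const_mul]
  refine setIntegral_mono_on ((integrable_gphi.comp_add_right y).const_mul _).integrableOn
    ((integrable_gphi.comp_add_right x).const_mul _).integrableOn measurableSet_Ioi ?_
  exact fun s hs => gphi_mul_gphi_add_le hxy (le_of_lt hs)

lemma Ufun_monotoneOn : MonotoneOn Ufun (Ioc 0 (1 / 2)) := by
  intro p ⟨hp0, _⟩ q ⟨hq0, hq⟩ hpq
  have hx := PhiInv_one_sub_nonneg hq0 hq
  have hyx := PhiInv_one_sub_le hp0 hpq (by linarith)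
  unfold Ufun
  gcongr
  · exact (gphi_pos _).le
  · exact gphi_antitoneOn hx (hx.trans hyx) hyx

lemma Ufun_div_sq_antitoneOn : AntitoneOn (fun p => Ufun p / p ^ 2) (Ioo 0 1) := by
  intro p ⟨hp0, hp1⟩ q ⟨hq0, hq1⟩ hpq
  have hazard := gphi_mul_Phi_neg_le (PhiInv_one_sub_le hp0 hpq hq1)
  rw [Phi_neg_PhiInv_one_sub hp0 hp1, Phi_neg_PhiInv_one_sub hq0 hq1] at hazard
  simp only [Ufun, ← div_pow]
  refine pow_le_pow_left₀ (div_pos (gphi_pos _) hq0).le ?_ 2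
  rw [div_le_div_iff₀ hq0 hp0]
  exact hazard

lemma Ufun_div_sq_le_sq_mul {p q c : ℝ} (hp0 : 0 < p) (hp : p ≤ 1 / 2) (hq0 : 0 < q)
    (hq : q ≤ 1 / 2) (hpq : p ≤ c * q) (hqp : q ≤ c * p) :
    Ufun q / q ^ 2 ≤ c ^ 2 * (Ufun p / p ^ 2) := by
  have hVp : 0 ≤ Ufun p / p ^ 2 := div_nonneg (sq_nonneg _) (sq_nonneg _)
  rcases le_total p q with h | h
  · have hc : 1 ≤ c := by nlinarith
    calc Ufun q / q ^ 2 ≤ Ufun p / p ^ 2 :=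
          Ufun_div_sq_antitoneOn ⟨hp0, by linarith⟩ ⟨hq0, by linarith⟩ h
      _ ≤ c ^ 2 * (Ufun p / p ^ 2) := le_mul_of_one_le_left hVp (one_le_pow₀ hc)
  · calc Ufun q / q ^ 2 ≤ Ufun p / q ^ 2 := by
          gcongr
          exact Ufun_monotoneOn ⟨hq0, hq⟩ ⟨hp0, hp⟩ h
      _ = (p / q) ^ 2 * (Ufun p / p ^ 2) := by
          field_simp
      _ ≤ c ^ 2 * (Ufun p / p ^ 2) := by
          gcongr
          exact (div_le_iff₀ hq0).2 hpq

theorem stmt6 (p phat τ : ℝ) (hp0 : 0 < p) (hp : p ≤ 1 / 2)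
    (hphat0 : 0 < phat) (hphat : phat ≤ 1 / 2) (hτ : 0 ≤ τ)
    (hlb : (1 + τ)⁻¹ * p ≤ phat) (hub : phat ≤ (1 + τ) * p) :
    (1 + τ)⁻¹ ^ 4 * (Ufun p / p ^ 2) ≤ Ufun phat / phat ^ 2 ∧
      Ufun phat / phat ^ 2 ≤ (1 + τ) ^ 4 * (Ufun p / p ^ 2) := by
  have hc : 1 ≤ 1 + τ := by linarith
  have hVp : 0 ≤ Ufun p / p ^ 2 := div_nonneg (sq_nonneg _) (sq_nonneg _)
  have hp_le : p ≤ (1 + τ) * phat := by rwa [inv_mul_le_iff₀ (by positivity)] at hlb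
  have upper := Ufun_div_sq_le_sq_mul hp0 hp hphat0 hphat hp_le hub
  have lower := Ufun_div_sq_le_sq_mul hphat0 hphat hp0 hp hub hp_le
  constructor
  · calc (1 + τ)⁻¹ ^ 4 * (Ufun p / p ^ 2) ≤ (1 + τ)⁻¹ ^ 2 * (Ufun p / p ^ 2) :=
          mul_le_mul_of_nonneg_right
            (pow_le_pow_of_le_one (by positivity) (inv_le_one_of_one_le₀ hc) (by norm_num)) hVp
      _ ≤ Ufun phat / phat ^ 2 := by
          rwa [inv_pow, inv_mul_le_iff₀ (by positivity)]
  · calc Ufun phat / phat ^ 2 ≤ (1 + τ) ^ 2 * (Ufun p / p ^ 2) := upper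
      _ ≤ (1 + τ) ^ 4 * (Ufun p / p ^ 2) :=
          mul_le_mul_of_nonneg_right (pow_le_pow_right₀ hc (by norm_num)) hVp
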